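/- With T(F) = (X ⊔ L, R, E) as constructed from an S5₂-Kripke frame F = (X, E₁, E₂), the composite relation Q = ER is the total relation on X ⊔ L; in particular every point is a Q-root. -/

import Mathlib

/-- The equivalence relation `E` of the frame `T(F)` on `X ⊔ X/E₂`. -/
def TE {X : Type*} (s : Setoid X) : X ⊕ Quotient s → X ⊕ Quotient s → Prop
  | Sum.inl x, Sum.inl y => s.r x y
  | Sum.inl x, Sum.inr α => Quotient.mk s x = α
  | Sum.inr α, Sum.inl y => Quotient.mk s y = α
  | Sum.inr α, Sum.inr β => α = β

/-- The quasi-order `R = E₁ ∪ (X × L) ∪ (L × L)` of the frame `T(F)` on `X ⊔ X/E₂`. -/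
def TR {X : Type*} (E₁ : X → X → Prop) (s : Setoid X) :
    X ⊕ Quotient s → X ⊕ Quotient s → Prop
  | Sum.inl x, Sum.inl y => E₁ x y
  | Sum.inl _, Sum.inr _ => True
  | Sum.inr _, Sum.inl _ => False
  | Sum.inr _, Sum.inr _ => True

theorem TR_inr {X : Type*} (E₁ : X → X → Prop) (s : Setoid X) (u : X ⊕ Quotient s)
    (α : Quotient s) : TR E₁ s u (.inr α) := by
  cases u <;> trivial

theorem exists_TE_inr {X : Type*} (s : Setoid X) :
    ∀ w : X ⊕ Quotient s, ∃ α : Quotient s, TE s (.inr α) w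
  | .inl y => ⟨Quotient.mk s y, rfl⟩
  | .inr β => ⟨β, rfl⟩

theorem stmt15_general {X : Type*} (E₁ : X → X → Prop) (s : Setoid X) :
    ∀ u w : X ⊕ Quotient s, ∃ v : X ⊕ Quotient s, TR E₁ s u v ∧ TE s v w := by
  intro u w
  obtain ⟨α, hα⟩ := exists_TE_inr s w
  exact ⟨.inr α, TR_inr E₁ s u α, hα⟩

/-- In `T(F)`, the composite relation `Q = ER` is the total relation; in particular
every point is a `Q`-root. -/
theorem stmt15 {X : Type*} (E₁ : X → X → Prop) (hE₁ : Equivalence E₁) (s : Setoid X) :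
    ∀ u w : X ⊕ Quotient s, ∃ v : X ⊕ Quotient s, TR E₁ s u v ∧ TE s v w :=
  stmt15_general E₁ s
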